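/- arXiv:1708.06107 — 6 statements merged into one kernel-verified Lean document; each statement's English description precedes it below -/
import Mathlib

section
/- Let z, w ∈ 𝕊 and suppose z has infinite order in the group 𝕊. Let V be a neighborhood of 1 in 𝕊. If w^l = 1 for every l ∈ ℕ such that z^l ∈ V, then w = 1. -/
open Filter Topology

/-! Positive powers of an element of infinite order accumulate at every point of the circle
(Kronecker). Hence some `z ^ l` with `l > 0` lies in `V`, so `w ^ l = 1`; since `z ^ l` again has
infinite order, some `z * (z ^ l) ^ q` lies in `V`, and then `w = w ^ (l * q + 1) = 1`. -/

namespace Circle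

theorem denseRange_zpow {z : Circle} (hz : orderOf z = 0) : DenseRange (z ^ · : ℤ → Circle) := by
  let e := AddCircle.homeomorphCircle one_ne_zero
  let a := e.symm z
  have hza : AddCircle.toCircle a = z := by
    rw [← AddCircle.homeomorphCircle_apply one_ne_zero, e.apply_symm_apply]
  have ha : addOrderOf a = 0 := by
    refine addOrderOf_eq_zero_iff'.mpr fun n hn han ↦ orderOf_eq_zero_iff'.mp hz n hn ?_
    rw [← hza, ← AddCircle.toCircle_nsmul, han, AddCircle.toCircle_zero]
  have he : (z ^ · : ℤ → Circle) = e ∘ (· • a) := by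
    ext n : 1
    simp [e, AddCircle.homeomorphCircle_apply, AddCircle.toCircle_zsmul, hza]
  rw [he]
  exact e.surjective.denseRange.comp (AddCircle.denseRange_zsmul_iff.mpr ha) e.continuous

theorem frequently_pow_mem {z : Circle} (hz : orderOf z = 0) {x : Circle} {U : Set Circle}
    (hU : U ∈ 𝓝 x) : ∃ᶠ n in atTop, z ^ n ∈ U := by
  have hx : MapClusterPt x atTop (z ^ · : ℕ → Circle) :=
    ((mapClusterPt_atTop_pow_tfae x z).out 0 3).mpr (denseRange_zpow hz x)
  exact mapClusterPt_iff_frequently.mp hx U hU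

end Circle

/-- If `z ∈ 𝕊` has infinite order, `V` is a neighborhood of `1` in `𝕊`, and `w^l = 1`
for every `l ∈ ℕ` (`l ≥ 1`) with `z^l ∈ V`, then `w = 1`. -/
theorem lemma_F0_Mackey (z w : Circle) (hz : ∀ n : ℕ, 0 < n → z ^ n ≠ 1)
    (V : Set Circle) (hV : V ∈ 𝓝 (1 : Circle))
    (h : ∀ l : ℕ, 0 < l → z ^ l ∈ V → w ^ l = 1) : w = 1 := by
  obtain ⟨l, hlV, hl⟩ :=
    ((Circle.frequently_pow_mem (orderOf_eq_zero_iff'.mpr hz) hV).and_eventually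
      (eventually_gt_atTop 0)).exists
  have hzl : orderOf (z ^ l) = 0 :=
    orderOf_eq_zero_iff'.mpr fun n hn ↦ by rw [← pow_mul]; exact hz _ (Nat.mul_pos hl hn)
  have hV' : (z * ·) ⁻¹' V ∈ 𝓝 z⁻¹ :=
    (continuous_const_mul z).continuousAt.preimage_mem_nhds (by rwa [mul_inv_cancel])
  obtain ⟨q, hq⟩ := (Circle.frequently_pow_mem hzl hV').exists
  have hwq : w ^ (l * q + 1) = 1 := h _ (Nat.succ_pos _) (by rwa [pow_succ', pow_mul])
  rwa [pow_succ, pow_mul, h l hl hlV, one_pow, one_mul] at hwq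
end

section
/- A locally quasi-convex abelian topological group (G,τ) is pre-Mackey if and only if for every pair of locally quasi-convex group topologies τ₁ and τ₂ on G that are compatible with τ, the supremum topology τ₁ ∨ τ₂ is also compatible with τ. -/
open Filter Topology

noncomputable section

/-- `𝕊₊ = {z ∈ 𝕊 : Re z ≥ 0}`. -/
def SPlus : Set Circle := {z : Circle | 0 ≤ (z : ℂ).re}

/-- A character of an abelian group `G` is a homomorphism `G → 𝕊`. -/
def IsChar {G : Type*} [AddCommGroup G] (χ : G → Circle) : Prop :=
  ∀ x y : G, χ (x + y) = χ x * χ y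

/-- Two topologies on an abelian group `G` are *compatible* if they have the same
continuous characters `G → 𝕊`. -/
def Compatible {G : Type*} [AddCommGroup G] (t₁ t₂ : TopologicalSpace G) : Prop :=
  ∀ χ : G → Circle, IsChar χ →
    (@Continuous G Circle t₁ _ χ ↔ @Continuous G Circle t₂ _ χ)

/-- A subset `A` of a topological abelian group is *quasi-convex* if for every `g ∉ A`
there is a continuous character `χ` with `χ(A) ⊆ 𝕊₊` and `χ(g) ∉ 𝕊₊`. -/
def IsQuasiConvex {G : Type*} [AddCommGroup G] (t : TopologicalSpace G) (A : Set G) : Prop :=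
  ∀ g : G, g ∉ A → ∃ χ : G → Circle, IsChar χ ∧ @Continuous G Circle t _ χ ∧
    (∀ a ∈ A, χ a ∈ SPlus) ∧ χ g ∉ SPlus

/-- A topological abelian group is *locally quasi-convex* if it has a neighborhood base
at `0` consisting of quasi-convex sets. -/
def LocallyQuasiConvex {G : Type*} [AddCommGroup G] (t : TopologicalSpace G) : Prop :=
  ∀ U ∈ @nhds G t 0, ∃ V ∈ @nhds G t 0, V ⊆ U ∧ IsQuasiConvex t V

/-!
If `μ` is the finest compatible locally quasi-convex topology, then `τ₁ ∨ τ₂` lies between `μ`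
and `τ₁`, both compatible with `τ`, so it has the same characters as `τ`.

Conversely, if suprema preserve compatibility, the locally quasi-convex topologies compatible
with `τ` form a directed family, and the neighbourhoods of `0` for its supremum `μ` are exactly
those of its members. Hence `μ` is locally quasi-convex, and for a `μ`-continuous character `χ`
the set `χ⁻¹(𝕊₊)` is a neighbourhood of `0` for a single member `ν`. That alone makes `χ`
`ν`-continuous: `1 - Re z ≤ (1 - Re z²) / 2` whenever `Re z ≥ 0`, so `χ(2ᵏx) ∈ 𝕊₊` for all
`k < n` forces `|χ x - 1|² ≤ 4 / 2ⁿ`.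

Mathlib orders group topologies so that `t ≤ s` means `t` is finer: the paper's `τ₁ ∨ τ₂` is
`τ₁ ⊓ τ₂` and the finest topology of a family is its `sInf`.
-/

namespace Circle

theorem re_sq_add_im_sq (z : Circle) : (z : ℂ).re ^ 2 + (z : ℂ).im ^ 2 = 1 := by
  simpa [Complex.normSq_apply, sq] using Circle.normSq_coe z

theorem dist_one_sq (z : Circle) : dist z 1 ^ 2 = 2 * (1 - (z : ℂ).re) := by
  have hnorm := re_sq_add_im_sq z
  change dist (z : ℂ) 1 ^ 2 = _
  rw [Complex.dist_eq, ← Complex.normSq_eq_norm_sq, Complex.normSq_apply]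
  simp only [Complex.sub_re, Complex.one_re, Complex.sub_im, Complex.one_im]
  nlinarith

theorem dist_one_sq_le_half_of_re_nonneg {z : Circle} (hz : 0 ≤ (z : ℂ).re) :
    dist z 1 ^ 2 ≤ dist (z ^ 2) 1 ^ 2 / 2 := by
  have hnorm := re_sq_add_im_sq z
  rw [dist_one_sq, dist_one_sq, sq z, Circle.coe_mul, Complex.mul_re]
  nlinarith

theorem dist_one_sq_le_of_forall_pow_mem_sPlus {n : ℕ} {z : Circle}
    (h : ∀ k < n, z ^ 2 ^ k ∈ SPlus) : dist z 1 ^ 2 ≤ 4 / 2 ^ n := by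
  induction n generalizing z with
  | zero =>
    rw [dist_one_sq]
    have := Complex.abs_re_le_norm (z : ℂ)
    rw [Circle.norm_coe, abs_le] at this
    norm_num
    linarith
  | succ n ih =>
    have hsq : dist (z ^ 2) 1 ^ 2 ≤ 4 / 2 ^ n :=
      ih fun k hk => by simpa [← pow_mul, ← pow_succ'] using h (k + 1) (by omega)
    have hre : 0 ≤ (z : ℂ).re := by simpa [SPlus] using h 0 (by omega)
    calc dist z 1 ^ 2 ≤ dist (z ^ 2) 1 ^ 2 / 2 := dist_one_sq_le_half_of_re_nonneg hre
      _ ≤ 4 / 2 ^ n / 2 := by gcongr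
      _ = 4 / 2 ^ (n + 1) := by ring

end Circle

theorem sPlus_mem_nhds_one : SPlus ∈ 𝓝 (1 : Circle) := by
  have hre : Continuous fun z : Circle => (z : ℂ).re :=
    Complex.continuous_re.comp continuous_subtype_val
  exact hre.continuousAt.preimage_mem_nhds (Ici_mem_nhds (by simp))

namespace IsChar

variable {G : Type*} [AddCommGroup G] {χ : G → Circle}

theorem map_zero (hχ : IsChar χ) : χ 0 = 1 := by
  simpa using hχ 0 0

theorem map_nsmul (hχ : IsChar χ) (n : ℕ) (x : G) : χ (n • x) = χ x ^ n := by
  induction n with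
  | zero => simpa using hχ.map_zero
  | succ n ih => rw [succ_nsmul, hχ, ih, pow_succ]

theorem preimage_sPlus_mem_nhds {t : TopologicalSpace G} (hχ : IsChar χ)
    (hc : Continuous[t, _] χ) : χ ⁻¹' SPlus ∈ @nhds G t 0 := by
  let := t
  exact hc.continuousAt.preimage_mem_nhds (hχ.map_zero ▸ sPlus_mem_nhds_one)

theorem continuous_of_preimage_sPlus_mem_nhds (t : AddGroupTopology G) (hχ : IsChar χ)
    (h : χ ⁻¹' SPlus ∈ @nhds G t.toTopologicalSpace 0) :
    Continuous[t.toTopologicalSpace, _] χ := by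
  let := t.toTopologicalSpace
  have := t.toIsTopologicalAddGroup
  have hsmall : ∀ n : ℕ, ∀ᶠ x in 𝓝 (0 : G), dist (χ x) 1 ^ 2 ≤ 4 / 2 ^ n := by
    intro n
    have hpow : ∀ k : ℕ, ∀ᶠ x in 𝓝 (0 : G), χ ((2 ^ k : ℕ) • x) ∈ SPlus := fun k =>
      (continuous_nsmul _).tendsto' 0 0 (smul_zero _) h
    filter_upwards [(Filter.eventually_all_finite (Set.finite_Iio n)).2 fun k _ => hpow k]
      with x hx
    exact Circle.dist_one_sq_le_of_forall_pow_mem_sPlus fun k hk => hχ.map_nsmul _ x ▸ hx k hk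
  have hat : Tendsto χ (𝓝 0) (𝓝 1) := by
    rw [Metric.tendsto_nhds]
    intro ε hε
    obtain ⟨n, hn⟩ := exists_pow_lt_of_lt_one (by positivity : 0 < ε ^ 2 / 4) one_half_lt_one
    filter_upwards [hsmall n] with x hx
    refine lt_of_pow_lt_pow_left₀ 2 hε.le (hx.trans_lt ?_)
    calc (4 : ℝ) / 2 ^ n = (1 / 2) ^ n * 4 := by rw [one_div_pow]; ring
      _ < ε ^ 2 / 4 * 4 := by gcongr
      _ = ε ^ 2 := by ring
  refine continuous_iff_continuousAt.2 fun x => ?_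
  rw [ContinuousAt]
  have hsub : Tendsto (fun y => y - x) (𝓝 x) (𝓝 0) := tendsto_sub_nhds_zero_iff.2 tendsto_id
  simpa using ((hat.comp hsub).const_mul (χ x)).congr fun y => by
    rw [Function.comp_apply, ← hχ, add_sub_cancel]

end IsChar

section Topologies

variable {G : Type*} [AddCommGroup G]

theorem Compatible.of_le_of_le {t₁ t t₂ s : TopologicalSpace G} (h₁ : t₁ ≤ t) (h₂ : t ≤ t₂)
    (c₁ : Compatible t₁ s) (c₂ : Compatible t₂ s) : Compatible t s := fun χ hχ =>
  ⟨fun hc => (c₁ χ hχ).1 (continuous_le_dom h₁ hc),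
    fun hc => continuous_le_dom h₂ ((c₂ χ hχ).2 hc)⟩

theorem IsQuasiConvex.mono {t t' : TopologicalSpace G} (h : t ≤ t') {A : Set G}
    (hA : IsQuasiConvex t' A) : IsQuasiConvex t A := fun g hg =>
  let ⟨χ, hχ, hc, hA, hg⟩ := hA g hg
  ⟨χ, hχ, continuous_le_dom h hc, hA, hg⟩

theorem IsQuasiConvex.inter {t : TopologicalSpace G} {A B : Set G} (hA : IsQuasiConvex t A)
    (hB : IsQuasiConvex t B) : IsQuasiConvex t (A ∩ B) := by
  intro g hg
  by_cases hgA : g ∈ A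
  · obtain ⟨χ, hχ, hc, hB, hg⟩ := hB g fun hgB => hg ⟨hgA, hgB⟩
    exact ⟨χ, hχ, hc, fun a ha => hB a ha.2, hg⟩
  · obtain ⟨χ, hχ, hc, hA, hg⟩ := hA g hgA
    exact ⟨χ, hχ, hc, fun a ha => hA a ha.1, hg⟩

theorem LocallyQuasiConvex.inf {t₁ t₂ : TopologicalSpace G} (h₁ : LocallyQuasiConvex t₁)
    (h₂ : LocallyQuasiConvex t₂) : LocallyQuasiConvex (t₁ ⊓ t₂) := by
  intro U hU
  rw [nhds_inf (t₁ := t₁), Filter.mem_inf_iff] at hU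
  obtain ⟨U₁, hU₁, U₂, hU₂, rfl⟩ := hU
  obtain ⟨V₁, hV₁, hV₁U, hqc₁⟩ := h₁ U₁ hU₁
  obtain ⟨V₂, hV₂, hV₂U, hqc₂⟩ := h₂ U₂ hU₂
  refine ⟨V₁ ∩ V₂, ?_, Set.inter_subset_inter hV₁U hV₂U,
    (hqc₁.mono inf_le_left).inter (hqc₂.mono inf_le_right)⟩
  rw [nhds_inf (t₁ := t₁)]
  exact Filter.inter_mem_inf hV₁ hV₂

theorem AddGroupTopology.mem_nhds_sInf_iff_of_directedOn {α : Type*} [AddGroup α]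
    {S : Set (AddGroupTopology α)} (hS : DirectedOn (· ≥ ·) S) (hne : S.Nonempty)
    {U : Set α} {x : α} :
    U ∈ @nhds α (sInf S).toTopologicalSpace x ↔ ∃ ν ∈ S, U ∈ @nhds α ν.toTopologicalSpace x := by
  rw [AddGroupTopology.toTopologicalSpace_sInf, nhds_sInf, iInf_image]
  refine mem_biInf_of_directed (fun a ha b hb => ?_) hne
  obtain ⟨c, hc, hca, hcb⟩ := hS a ha b hb
  exact ⟨c, hc, nhds_mono hca, nhds_mono hcb⟩

theorem locallyQuasiConvex_sInf {S : Set (AddGroupTopology G)} (hS : DirectedOn (· ≥ ·) S)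
    (hne : S.Nonempty) (h : ∀ ν ∈ S, LocallyQuasiConvex ν.toTopologicalSpace) :
    LocallyQuasiConvex (sInf S).toTopologicalSpace := by
  intro U hU
  obtain ⟨ν, hν, hUν⟩ := (AddGroupTopology.mem_nhds_sInf_iff_of_directedOn hS hne).1 hU
  obtain ⟨V, hV, hVU, hVqc⟩ := h ν hν U hUν
  exact ⟨V, (AddGroupTopology.mem_nhds_sInf_iff_of_directedOn hS hne).2 ⟨ν, hν, hV⟩, hVU,
    hVqc.mono (sInf_le (α := AddGroupTopology G) hν)⟩

theorem compatible_sInf {S : Set (AddGroupTopology G)} (hS : DirectedOn (· ≥ ·) S)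
    (hne : S.Nonempty) {s : TopologicalSpace G} (h : ∀ ν ∈ S, Compatible ν.toTopologicalSpace s) :
    Compatible (sInf S).toTopologicalSpace s := by
  intro χ hχ
  obtain ⟨ν₀, hν₀⟩ := hne
  refine ⟨fun hc => ?_, fun hc =>
    continuous_le_dom (sInf_le (α := AddGroupTopology G) hν₀) ((h ν₀ hν₀ χ hχ).2 hc)⟩
  obtain ⟨ν, hν, hχν⟩ := (AddGroupTopology.mem_nhds_sInf_iff_of_directedOn hS ⟨ν₀, hν₀⟩).1
    (hχ.preimage_sPlus_mem_nhds hc)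
  exact (h ν hν χ hχ).1 (hχ.continuous_of_preimage_sPlus_mem_nhds ν hχν)

end Topologies

/-- A locally quasi-convex abelian topological group `(G, τ)` is pre-Mackey (there is a
locally quasi-convex group topology `μ` compatible with `τ` such that every locally
quasi-convex group topology compatible with `τ` is coarser than `μ`) if and only if for all
locally quasi-convex group topologies `τ₁, τ₂` compatible with `τ`, their supremum
`τ₁ ∨ τ₂` is compatible with `τ`.  (In Mathlib's lattice of group topologies `t ≤ s` means
`t` is finer than `s`, so the least group topology finer than both `τ₁` and `τ₂` is the
lattice-theoretic infimum `τ₁ ⊓ τ₂`, whose underlying topology is the topology generated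
by the union of the two families of open sets.) -/
theorem preMackey_iff_sup_compatible {G : Type*} [AddCommGroup G] (τ : AddGroupTopology G)
    (hτ : LocallyQuasiConvex τ.toTopologicalSpace) :
    (∃ μ : AddGroupTopology G,
        LocallyQuasiConvex μ.toTopologicalSpace ∧
        Compatible μ.toTopologicalSpace τ.toTopologicalSpace ∧
        ∀ ν : AddGroupTopology G,
          LocallyQuasiConvex ν.toTopologicalSpace →
          Compatible ν.toTopologicalSpace τ.toTopologicalSpace →
          ∀ U : Set G, IsOpen[ν.toTopologicalSpace] U → IsOpen[μ.toTopologicalSpace] U) ↔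
    (∀ τ₁ τ₂ : AddGroupTopology G,
        LocallyQuasiConvex τ₁.toTopologicalSpace →
        Compatible τ₁.toTopologicalSpace τ.toTopologicalSpace →
        LocallyQuasiConvex τ₂.toTopologicalSpace →
        Compatible τ₂.toTopologicalSpace τ.toTopologicalSpace →
        Compatible (τ₁ ⊓ τ₂).toTopologicalSpace τ.toTopologicalSpace) := by
  constructor
  · rintro ⟨μ, -, hμτ, hμ⟩ τ₁ τ₂ h₁ c₁ h₂ c₂
    have hle : ∀ ν : AddGroupTopology G, LocallyQuasiConvex ν.toTopologicalSpace →
        Compatible ν.toTopologicalSpace τ.toTopologicalSpace →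
        μ.toTopologicalSpace ≤ ν.toTopologicalSpace := fun ν hν cν =>
      TopologicalSpace.le_def.2 (hμ ν hν cν)
    exact Compatible.of_le_of_le (le_inf (hle τ₁ h₁ c₁) (hle τ₂ h₂ c₂)) inf_le_left hμτ c₁
  · intro hsup
    set S := {ν : AddGroupTopology G | LocallyQuasiConvex ν.toTopologicalSpace ∧
      Compatible ν.toTopologicalSpace τ.toTopologicalSpace}
    have hS : DirectedOn (· ≥ ·) S := fun a ha b hb =>
      ⟨a ⊓ b, ⟨ha.1.inf hb.1, hsup a b ha.1 ha.2 hb.1 hb.2⟩, inf_le_left, inf_le_right⟩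
    have hne : S.Nonempty := ⟨τ, hτ, fun _ _ => Iff.rfl⟩
    exact ⟨sInf S, locallyQuasiConvex_sInf hS hne fun ν hν => hν.1,
      compatible_sInf hS hne fun ν hν => hν.2,
      fun ν hν cν U hU => hU.mono (sInf_le (α := AddGroupTopology G) ⟨hν, cν⟩)⟩

end
end

section
/- Let z ∈ 𝕊 have infinite order and let a ∈ 𝕊, a ≠ 1, have finite order. Then the supremum topology 𝒯_z ∨ 𝒯_{az} on ℤ^(ℕ) is not compatible with the topology τ of A_G(s): there exists a group homomorphism χ : ℤ^(ℕ) → 𝕊 that is continuous for 𝒯_z ∨ 𝒯_{az} but not continuous for τ. -/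
open Filter Topology

noncomputable section

/-- The convergent sequence `s = {0} ∪ {1/n : n ∈ ℕ}` as a subspace of `ℝ`. -/
def sSet : Set ℝ := {x : ℝ | x = 0 ∨ ∃ n : ℕ, 0 < n ∧ x = 1 / n}

/-- The natural map `s → ℤ^(ℕ)`, sending `0 ↦ 0` and `1/n ↦ e_n = single n 1`. -/
def sMap (x : sSet) : ℕ →₀ ℤ :=
  if (x : ℝ) = 0 then 0 else Finsupp.single ⌈(1 : ℝ) / (x : ℝ)⌉₊ 1

/-- The topology of the Graev free abelian topological group `A_G(s)`, i.e. the finest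
group topology on `ℤ^(ℕ)` making `sMap : s → ℤ^(ℕ)` continuous.  In Mathlib's lattice of
(group) topologies `t ≤ s` means `t` is *finer* than `s`, so the finest such group topology
is the `sInf` of the collection of all group topologies making `sMap` continuous; this
`sInf` itself makes `sMap` continuous, since `Continuous` into `t` means
`coinduced sMap _ ≤ t.toTopologicalSpace`, a condition preserved by `sInf`. -/
def tauGT : AddGroupTopology (ℕ →₀ ℤ) :=
  sInf {t : AddGroupTopology (ℕ →₀ ℤ) | @Continuous _ _ _ t.toTopologicalSpace sMap}

/-- The topology `τ` of `A_G(s)` on `ℤ^(ℕ)`. -/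
def tau : TopologicalSpace (ℕ →₀ ℤ) := tauGT.toTopologicalSpace

/-- `c₀(𝕊) = {(z_n) ∈ 𝕊^ℕ : z_n → 1}` as a subgroup of `𝕊^ℕ`. -/
def c0S : Subgroup (ℕ → Circle) where
  carrier := {u : ℕ → Circle | Tendsto u atTop (nhds 1)}
  one_mem' := tendsto_const_nhds
  mul_mem' := fun hu hv => by simpa [Pi.mul_def] using hu.mul hv
  inv_mem' := fun hu => by simpa [Pi.inv_def] using hu.inv

/-- The group `F₀(𝕊)`: the group `c₀(𝕊)` endowed (below) with the sup-metric
`d((z_n),(w_n)) = sup_n |z_n - w_n|`. -/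
def F0 : Type := c0S

instance : CommGroup F0 := inferInstanceAs (CommGroup c0S)

namespace F0

/-- The underlying sequence of an element of `F₀(𝕊)`. -/
def seq (u : F0) : ℕ → Circle := Subtype.val (p := fun u => u ∈ c0S) u

lemma seq_tendsto (u : F0) : Tendsto u.seq atTop (nhds 1) :=
  (Subtype.prop (p := fun u => u ∈ c0S) u : _)

lemma ext {u v : F0} (h : u.seq = v.seq) : u = v :=
  Subtype.ext (p := fun u => u ∈ c0S) h

/-- Construct an element of `F₀(𝕊)` from a sequence converging to `1`. -/
def mk (u : ℕ → Circle) (hu : Tendsto u atTop (nhds 1)) : F0 :=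
  Subtype.mk (p := fun u => u ∈ c0S) u hu

lemma dist_circle_le (a b : Circle) : dist a b ≤ 2 := by
  have : dist (a : ℂ) (b : ℂ) ≤ ‖(a : ℂ)‖ + ‖(b : ℂ)‖ := by
    rw [dist_eq_norm]; exact norm_sub_le _ _
  have ha : ‖(a : ℂ)‖ = 1 := a.norm_coe
  have hb : ‖(b : ℂ)‖ = 1 := b.norm_coe
  calc dist a b = dist (a : ℂ) (b : ℂ) := rfl
    _ ≤ 2 := by rw [ha, hb] at this; linarith

lemma bddAbove_dist (u v : F0) :
    BddAbove (Set.range fun n => dist (u.seq n) (v.seq n)) := by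
  refine ⟨2, ?_⟩
  rintro x ⟨n, rfl⟩
  exact dist_circle_le _ _

/-- `F₀(𝕊)` endowed with the metric `d((z_n),(w_n)) = sup_n |z_n - w_n|`. -/
instance : MetricSpace F0 where
  dist u v := ⨆ n, dist (u.seq n) (v.seq n)
  dist_self u := by simp
  dist_comm u v := by simp only [dist_comm]
  dist_triangle u v w := by
    refine ciSup_le fun n => ?_
    calc dist (u.seq n) (w.seq n) ≤ dist (u.seq n) (v.seq n) + dist (v.seq n) (w.seq n) :=
          dist_triangle _ _ _
      _ ≤ (⨆ m, dist (u.seq m) (v.seq m)) + ⨆ m, dist (v.seq m) (w.seq m) :=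
          add_le_add (le_ciSup (bddAbove_dist u v) n) (le_ciSup (bddAbove_dist v w) n)
  eq_of_dist_eq_zero := by
    intro u v h
    refine ext (funext fun n => ?_)
    have hn : dist (u.seq n) (v.seq n) ≤ 0 := h ▸ le_ciSup (bddAbove_dist u v) n
    exact eq_of_dist_eq_zero (le_antisymm hn dist_nonneg)

lemma dist_def (u v : F0) : dist u v = ⨆ n, dist (u.seq n) (v.seq n) := rfl

end F0

/-- The monomorphism `T_z : ℤ^(ℕ) → A_G(s) × F₀(𝕊)`, `T_z((n_k)) = ((n_k), (z^{n_k})_k)`. -/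
def Tz (z : Circle) (x : ℕ →₀ ℤ) : (ℕ →₀ ℤ) × F0 :=
  ⟨x, F0.mk (fun k => z ^ (x k)) (by
    have h : ∀ᶠ k in atTop, (1 : Circle) = z ^ (x k) := by
      obtain ⟨N, hN⟩ := x.support.finite_toSet.bddAbove
      filter_upwards [eventually_ge_atTop (N + 1)] with k hk
      have hx : x k = 0 := by
        by_contra hne
        have : k ≤ N := hN (Finsupp.mem_support_iff.mpr hne)
        omega
      simp [hx]
    exact tendsto_const_nhds.congr' h)⟩

/-- The topology `𝒯_z` on `ℤ^(ℕ)` induced from `A_G(s) × F₀(𝕊)` via `T_z`,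
where the first factor carries `τ` and the second the sup-metric topology. -/
def TzTop (z : Circle) : TopologicalSpace (ℕ →₀ ℤ) :=
  TopologicalSpace.induced (Tz z) (@instTopologicalSpaceProd _ _ tau inferInstance)

/-!
The character `χ x = a ^ (∑ k, x k)` works. It is not `τ`-continuous, because `e_n → 0` in
`A_G(s)` while `χ e_n = a ≠ 1`. It is locally constant for `𝒯_z ∨ 𝒯_{az}`: if `y` is close to
`x` in both topologies, then `z ^ y k` is close to `z ^ x k` and `(a z) ^ y k` to `(a z) ^ x k`
uniformly in `k`, hence `a ^ y k` is close to `a ^ x k` for all `k`. As `a` has finite order,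
its powers form a finite, hence uniformly discrete, set; so `a ^ y k = a ^ x k` for every `k`,
and `χ y = χ x`.
-/

instance : IsIsometricSMul Circle Circle :=
  ⟨fun c => Isometry.of_dist_eq fun u v => by
    change dist ((c : ℂ) * u) ((c : ℂ) * v) = dist (u : ℂ) v
    rw [Complex.dist_eq, Complex.dist_eq, ← mul_sub, norm_mul, Circle.norm_coe, one_mul]⟩

theorem Set.Finite.exists_pos_forall_dist_lt_imp_eq {X : Type*} [MetricSpace X] {S : Set X}
    (hS : S.Finite) : ∃ δ > 0, ∀ u ∈ S, ∀ v ∈ S, dist u v < δ → u = v := by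
  have hsmall : ∀ᶠ δ in 𝓝[>] (0 : ℝ), ∀ u ∈ S, ∀ v ∈ S, u ≠ v → δ < dist u v := by
    refine hS.eventually_all.2 fun u _ => hS.eventually_all.2 fun v _ => ?_
    rcases eq_or_ne u v with rfl | huv
    · exact .of_forall fun _ h => (h rfl).elim
    · filter_upwards [Ioo_mem_nhdsGT (dist_pos.2 huv)] with δ hδ _ using hδ.2
  obtain ⟨δ, hδ, h⟩ := (eventually_mem_nhdsWithin.and hsmall).exists
  exact ⟨δ, hδ, fun u hu v hv huv => by_contra fun hne => (h u hu v hv hne).not_gt huv⟩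

theorem dist_div_div_le_add {G : Type*} [CommGroup G] [PseudoMetricSpace G]
    [IsIsometricSMul G G] (u u' v v' : G) : dist (u / v) (u' / v') ≤ dist u u' + dist v v' :=
  calc dist (u / v) (u' / v') ≤ dist (u / v) (u' / v) + dist (u' / v) (u' / v') :=
        dist_triangle ..
    _ = dist u u' + dist v v' := by rw [dist_div_right, dist_div_left]

section powChar

variable {ι G : Type*} [CommGroup G] (a : G)

def powChar (x : ι →₀ ℤ) : G := x.prod fun _ n => a ^ n

theorem powChar_add (x y : ι →₀ ℤ) : powChar a (x + y) = powChar a x * powChar a y :=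
  Finsupp.prod_add_index' (fun _ => zpow_zero a) fun _ => zpow_add a

theorem powChar_single (i : ι) (n : ℤ) : powChar a (Finsupp.single i n) = a ^ n :=
  Finsupp.prod_single_index (zpow_zero a)

theorem powChar_zero : powChar a (0 : ι →₀ ℤ) = 1 :=
  Finsupp.prod_zero_index

variable {a} in
theorem powChar_congr {x y : ι →₀ ℤ} (h : ∀ i, a ^ x i = a ^ y i) :
    powChar a x = powChar a y := by
  classical
  rw [powChar, powChar, Finsupp.prod_of_support_subset x Finset.subset_union_left _
      (fun _ _ => zpow_zero a), Finsupp.prod_of_support_subset y Finset.subset_union_right _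
      (fun _ _ => zpow_zero a)]
  exact Finset.prod_congr rfl fun i _ => h i

end powChar

theorem F0.dist_seq_le (u v : F0) (n : ℕ) : dist (u.seq n) (v.seq n) ≤ dist u v :=
  le_ciSup (bddAbove_dist u v) n

theorem eventually_forall_dist_zpow_lt (w : Circle) (x : ℕ →₀ ℤ) {ε : ℝ} (hε : 0 < ε) :
    ∀ᶠ y in @nhds _ (TzTop w) x, ∀ k, dist (w ^ y k) (w ^ x k) < ε := by
  have hcont : Continuous[TzTop w, _] fun y => (Tz w y).2 :=
    @Continuous.comp _ _ _ (TzTop w) (@instTopologicalSpaceProd _ _ tau _) _ _ _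
      (@continuous_snd _ F0 tau _) continuous_induced_dom
  filter_upwards [(@Continuous.tendsto _ _ (TzTop w) _ _ hcont x) (Metric.ball_mem_nhds _ hε)]
    with y hy k
  exact (F0.dist_seq_le _ _ k).trans_lt hy

theorem continuous_powChar_TzTop_inf (z : Circle) {a : Circle} (ha : IsOfFinOrder a) :
    Continuous[TzTop z ⊓ TzTop (a * z), _] (powChar a) := by
  obtain ⟨δ, hδ, hdisc⟩ := (finite_zpowers.2 ha).exists_pos_forall_dist_lt_imp_eq
  refine (@continuous_iff_continuousAt _ _ (TzTop z ⊓ TzTop (a * z)) _ _).2 fun x =>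
    tendsto_nhds_of_eventually_eq ?_
  rw [nhds_inf]
  filter_upwards [mem_inf_of_left (eventually_forall_dist_zpow_lt z x (half_pos hδ)),
    mem_inf_of_right (eventually_forall_dist_zpow_lt (a * z) x (half_pos hδ))] with y hz haz
  refine powChar_congr fun k =>
    hdisc _ (Subgroup.zpow_mem_zpowers a _) _ (Subgroup.zpow_mem_zpowers a _) ?_
  calc dist (a ^ y k) (a ^ x k)
      = dist ((a * z) ^ y k / z ^ y k) ((a * z) ^ x k / z ^ x k) := by
        simp only [mul_zpow, mul_div_cancel_right]
    _ ≤ dist ((a * z) ^ y k) ((a * z) ^ x k) + dist (z ^ y k) (z ^ x k) := dist_div_div_le_add ..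
    _ < δ / 2 + δ / 2 := add_lt_add (haz k) (hz k)
    _ = δ := add_halves δ

theorem continuous_sMap : Continuous[_, tau] sMap := by
  rw [continuous_iff_coinduced_le, tau, tauGT, AddGroupTopology.toTopologicalSpace_sInf]
  exact le_sInf <| by
    rintro _ ⟨t, ht, rfl⟩
    exact continuous_iff_coinduced_le.1 ht

theorem sMap_one_div_natCast {n : ℕ} (hn : 0 < n) :
    sMap ⟨1 / n, Or.inr ⟨n, hn, rfl⟩⟩ = Finsupp.single n 1 := by
  rw [sMap, if_neg (by simp [hn.ne']), one_div_one_div, Nat.ceil_natCast]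

theorem tendsto_single_one_tau :
    Tendsto (fun n : ℕ => Finsupp.single (n + 1) (1 : ℤ)) atTop (@nhds _ tau 0) := by
  have hs : Tendsto
      (fun n : ℕ => (⟨1 / ((n + 1 : ℕ) : ℝ), Or.inr ⟨n + 1, n.succ_pos, rfl⟩⟩ : sSet))
      atTop (𝓝 ⟨0, Or.inl rfl⟩) :=
    tendsto_subtype_rng.2 (by simpa using tendsto_one_div_add_atTop_nhds_zero_nat (𝕜 := ℝ))
  have h0 : sMap ⟨0, Or.inl rfl⟩ = 0 := if_pos rfl
  simpa only [Function.comp_def, sMap_one_div_natCast (Nat.succ_pos _), h0] using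
    (@Continuous.tendsto _ _ _ tau _ continuous_sMap _).comp hs

/- In Mathlib's lattice of topologies `t ≤ s` means that `t` is finer than `s`, so the supremum
`𝒯_z ∨ 𝒯_{az}` is the infimum `TzTop z ⊓ TzTop (a * z)`. -/
theorem sup_TzTop_not_compatible_general (z a : Circle)
    (ha1 : a ≠ 1) (ha : ∃ r : ℕ, 0 < r ∧ a ^ r = 1) :
    ∃ χ : (ℕ →₀ ℤ) → Circle, IsChar χ ∧
      @Continuous _ _ (TzTop z ⊓ TzTop (a * z)) _ χ ∧ ¬ @Continuous _ _ tau _ χ := by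
  refine ⟨powChar a, powChar_add a,
    continuous_powChar_TzTop_inf z (isOfFinOrder_iff_pow_eq_one.2 ha), fun hc => ha1 ?_⟩
  have h := (@Continuous.tendsto _ _ tau _ _ hc 0).comp tendsto_single_one_tau
  simp only [Function.comp_def, powChar_single, zpow_one, powChar_zero] at h
  exact tendsto_const_nhds_iff.1 h

/-- For `z ∈ 𝕊` of infinite order and `a ∈ 𝕊`, `a ≠ 1`, of finite order, the supremum
topology `𝒯_z ∨ 𝒯_{az}` is not compatible with `τ`: some character is continuous for
`𝒯_z ∨ 𝒯_{az}` but not for `τ`. -/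
theorem sup_TzTop_not_compatible (z a : Circle) (hz : ∀ n : ℕ, 0 < n → z ^ n ≠ 1)
    (ha1 : a ≠ 1) (ha : ∃ r : ℕ, 0 < r ∧ a ^ r = 1) :
    ∃ χ : (ℕ →₀ ℤ) → Circle, IsChar χ ∧
      @Continuous _ _ (TzTop z ⊓ TzTop (a * z)) _ χ ∧ ¬ @Continuous _ _ tau _ χ :=
  sup_TzTop_not_compatible_general z a ha1 ha
end
end

section
/- Let (g_n) be a sequence in ℤ^(ℕ), written g_n = (r^n_j)_{j∈ℕ}, such that there exists a constant C > 0 with Σ_j |r^n_j| ≤ C for every n, and such that the smallest index i_n of the support of g_n (i.e. r^n_j = 0 for all j < i_n) tends to infinity as n → ∞. Then g_n → 0 in the topology τ of A_G(s). -/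
/-!
In any group topology making `s → ℤ^(ℕ)` continuous the basis vectors `e_j` tend to `0`.
A vector of `ℓ¹`-norm at most `K` is a sum of at most `K` terms `±e_j` with `j` in its support,
so for a neighbourhood `U` of `0` it suffices to pick a symmetric `W` whose `K`-fold sums lie in
`U` and `N` with `e_j ∈ W` for `j ≥ N`: then `g_n ∈ U` as soon as `i_n ≥ N`. As `τ` is the
infimum of all such topologies, `g_n → 0` in `τ`.
-/

open Filter Topology

noncomputable section

theorem Int.natAbs_sub_sign_add_one {a : ℤ} (ha : a ≠ 0) :
    (a - a.sign).natAbs + 1 = a.natAbs := by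
  rcases ha.lt_or_gt with h | h
  · rw [Int.sign_eq_neg_one_of_neg h]; omega
  · rw [Int.sign_eq_one_of_pos h]; omega

namespace Finsupp

variable {ι : Type*}

def absSum (f : ι →₀ ℤ) : ℕ := f.sum fun _ r => r.natAbs

theorem cast_absSum (f : ι →₀ ℤ) : (f.absSum : ℝ) = f.sum fun _ r => (|r| : ℝ) := by
  simp [absSum, Finsupp.sum, Nat.cast_natAbs]

theorem absSum_eq_zero {f : ι →₀ ℤ} : f.absSum = 0 ↔ f = 0 := by
  simp [absSum, Finsupp.sum, Finset.sum_eq_zero_iff, Finsupp.ext_iff]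

theorem exists_absSum_sub_single_sign {f : ι →₀ ℤ} (hf : f ≠ 0) :
    ∃ j ∈ f.support, (f - single j (f j).sign).absSum + 1 = f.absSum ∧
      (f - single j (f j).sign).support ⊆ f.support := by
  classical
  obtain ⟨j, hj⟩ := support_nonempty_iff.2 hf
  set f' := f - single j (f j).sign
  have hsupp : f'.support ⊆ f.support := support_sub.trans <|
    Finset.union_subset subset_rfl (support_single_subset.trans (Finset.singleton_subset_iff.2 hj))
  have hoff : ∀ k ∈ f.support.erase j, (f' k).natAbs = (f k).natAbs := fun k hk => by
    simp [f', Ne.symm (Finset.ne_of_mem_erase hk)]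
  refine ⟨j, hj, ?_, hsupp⟩
  rw [absSum, absSum, sum_of_support_subset _ hsupp _ (fun _ _ => Int.natAbs_zero), Finsupp.sum,
    ← Finset.add_sum_erase _ _ hj, ← Finset.add_sum_erase _ _ hj, Finset.sum_congr rfl hoff,
    add_right_comm]
  simpa [f'] using Int.natAbs_sub_sign_add_one (mem_support_iff.1 hj)

end Finsupp

open Finsupp

section TopologicalAddGroup

variable {G : Type*} [AddCommGroup G] [TopologicalSpace G] [IsTopologicalAddGroup G]

theorem exists_nhds_zero_linearCombination_mem_of_absSum_le {ι : Type*} (K : ℕ) {U : Set G}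
    (hU : U ∈ 𝓝 0) :
    ∃ W ∈ 𝓝 (0 : G), ∀ (f : ι →₀ ℤ) (x : ι → G), f.absSum ≤ K → (∀ j ∈ f.support, x j ∈ W) →
      linearCombination ℤ x f ∈ U := by
  induction K generalizing U with
  | zero =>
    refine ⟨Set.univ, univ_mem, fun f x hf _ => ?_⟩
    rw [Nat.le_zero, absSum_eq_zero] at hf
    simpa [hf] using mem_of_mem_nhds hU
  | succ K ih =>
    obtain ⟨V, hV, hVU⟩ := exists_nhds_zero_half hU
    obtain ⟨W, hW, hWV⟩ := ih hV
    refine ⟨W ∩ (V ∩ -V), inter_mem hW (inter_mem hV (neg_mem_nhds_zero G hV)),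
      fun f x hfK hx => ?_⟩
    rcases eq_or_ne f 0 with rfl | hf
    · simpa using mem_of_mem_nhds hU
    obtain ⟨j, hj, hweight, hsupp⟩ := f.exists_absSum_sub_single_sign hf
    have hsplit : linearCombination ℤ x f =
        linearCombination ℤ x (f - single j (f j).sign) + (f j).sign • x j := by
      simp
    obtain ⟨-, hxV, hxnegV⟩ := hx j hj
    have hsign : (f j).sign • x j ∈ V := by
      rcases Int.sign_trichotomy (f j) with h | h | h <;>
        simp [h, hxV, mem_of_mem_nhds hV, Set.mem_neg.1 hxnegV]
    rw [hsplit]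
    exact hVU _ (hWV _ x (by omega) fun k hk => (hx k (hsupp hk)).1) _ hsign

theorem tendsto_linearCombination_zero_of_absSum_le {α : Type*} {l : Filter α} {x : ℕ → G}
    (hx : Tendsto x atTop (𝓝 0)) {g : α → ℕ →₀ ℤ} {i : α → ℕ}
    (hsupp : ∀ n, ∀ j, j < i n → g n j = 0) (hi : Tendsto i l atTop) {K : ℕ}
    (hK : ∀ n, (g n).absSum ≤ K) :
    Tendsto (fun n => linearCombination ℤ x (g n)) l (𝓝 0) := by
  intro U hU
  obtain ⟨W, hW, hWU⟩ := exists_nhds_zero_linearCombination_mem_of_absSum_le K hU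
  obtain ⟨N, hN⟩ := eventually_atTop.1 (hx hW)
  exact (hi.eventually_ge_atTop N).mono fun n hn => hWU _ _ (hK n) fun j hj =>
    hN j (hn.trans (not_lt.1 fun h => mem_support_iff.1 hj (hsupp n j h)))

end TopologicalAddGroup

theorem sMap_zero : sMap ⟨0, Or.inl rfl⟩ = 0 := by
  simp [sMap]

def oneDivSucc (j : ℕ) : sSet :=
  ⟨1 / ((j : ℝ) + 1), Or.inr ⟨j + 1, j.succ_pos, by push_cast; rfl⟩⟩

theorem sMap_oneDivSucc (j : ℕ) : sMap (oneDivSucc j) = single (j + 1) 1 := by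
  rw [sMap, if_neg (by simp [oneDivSucc]; positivity), oneDivSucc, one_div_one_div,
    ← Nat.cast_add_one, Nat.ceil_natCast]

theorem tendsto_oneDivSucc : Tendsto oneDivSucc atTop (𝓝 ⟨0, Or.inl rfl⟩) :=
  tendsto_subtype_rng.2 tendsto_one_div_add_atTop_nhds_zero_nat

theorem tendsto_single_one_of_continuous_sMap {t : TopologicalSpace (ℕ →₀ ℤ)}
    (ht : Continuous[_, t] sMap) :
    Tendsto (fun j : ℕ => single j (1 : ℤ)) atTop (@nhds _ t 0) := by
  have := (ht.tendsto _).comp tendsto_oneDivSucc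
  simp only [sMap_zero, Function.comp_def, sMap_oneDivSucc] at this
  exact (tendsto_add_atTop_iff_nat 1).1 this

theorem tendsto_zero_in_tau_general (g : ℕ → (ℕ →₀ ℤ)) (i : ℕ → ℕ)
    (hsupp : ∀ n : ℕ, ∀ j : ℕ, j < i n → g n j = 0)
    (hi : Tendsto i atTop atTop)
    (C : ℝ) (hbound : ∀ n : ℕ, ((g n).sum fun _ r => (|r| : ℝ)) ≤ C) :
    Tendsto g atTop (@nhds _ tau 0) := by
  have hK (n : ℕ) : (g n).absSum ≤ ⌈C⌉₊ := by
    exact_mod_cast ((g n).cast_absSum ▸ hbound n).trans (Nat.le_ceil C)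
  rw [tau, tauGT, AddGroupTopology.toTopologicalSpace_sInf, nhds_sInf]
  simp only [tendsto_iInf, Set.forall_mem_image]
  intro T hT
  let := T.toTopologicalSpace
  have := T.toIsTopologicalAddGroup
  simpa [linearCombination_apply, smul_single_one] using
    tendsto_linearCombination_zero_of_absSum_le (tendsto_single_one_of_continuous_sMap hT) hsupp hi hK

/-- If `g_n = (r^n_j)_j` is a sequence in `ℤ^(ℕ)` with `Σ_j |r^n_j| ≤ C` for all `n` and
with `r^n_j = 0` for `j < i_n` where `i_n → ∞`, then `g_n → 0` in `τ`. -/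
theorem tendsto_zero_in_tau (g : ℕ → (ℕ →₀ ℤ)) (i : ℕ → ℕ)
    (hsupp : ∀ n : ℕ, ∀ j : ℕ, j < i n → g n j = 0)
    (hi : Tendsto i atTop atTop)
    (C : ℝ) (hC : 0 < C) (hbound : ∀ n : ℕ, ((g n).sum fun _ r => (|r| : ℝ)) ≤ C) :
    Tendsto g atTop (@nhds _ tau 0) :=
  tendsto_zero_in_tau_general g i hsupp hi C hbound

end
end

section
/- The natural map from s into the Graev free abelian topological group A_G(s), sending 0 to 0 and 1/n to e_n, is a topological embedding of s onto its image in (ℤ^(ℕ), τ); in particular e_n → 0 in the topology τ. -/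
open Filter Topology

noncomputable section

/-- The evaluation homomorphism `ℤ^(ℕ) →+ ℝ`, `e_n ↦ 1/n`. -/
def phi : (ℕ →₀ ℤ) →+ ℝ :=
  (Finsupp.linearCombination ℤ (fun n : ℕ => 1 / (n : ℝ))).toAddMonoidHom

lemma phi_comp (x : sSet) : phi (sMap x) = (x : ℝ) := by
  rcases x.2 with h | ⟨n, hn, h⟩
  · simp [sMap, h, phi]
  · have hx : (x : ℝ) = 1 / n := h
    have hn' : (0 : ℝ) < n := by exact_mod_cast hn
    have hne : (x : ℝ) ≠ 0 := by rw [hx]; positivity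
    rw [sMap, if_neg hne, hx, one_div_one_div, Nat.ceil_natCast]
    simp [phi, Finsupp.linearCombination_single]

/-- The concrete group topology induced from `ℝ` via `phi`. -/
def tSpec : AddGroupTopology (ℕ →₀ ℤ) :=
  ⟨TopologicalSpace.induced phi inferInstance, topologicalAddGroup_induced phi⟩

lemma phi_comp_fun : phi ∘ sMap = (Subtype.val : sSet → ℝ) := funext phi_comp

lemma tSpec_mem :
    tSpec ∈ {t : AddGroupTopology (ℕ →₀ ℤ) | @Continuous _ _ _ t.toTopologicalSpace sMap} := by
  rw [Set.mem_setOf_eq]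
  show Continuous[_, TopologicalSpace.induced phi inferInstance] sMap
  rw [continuous_induced_rng, phi_comp_fun]
  exact continuous_subtype_val

lemma sMap_cont : @Continuous _ _ _ tau sMap := by
  rw [tau, tauGT, AddGroupTopology.toTopologicalSpace_sInf, continuous_sInf_rng]
  rintro t ⟨t', ht', rfl⟩
  exact ht'

lemma sMap_injective : Function.Injective sMap := by
  have : Function.Injective (phi ∘ sMap) := by
    rw [phi_comp_fun]; exact Subtype.val_injective
  exact Function.Injective.of_comp this

/-- The natural map `s → A_G(s)`, `0 ↦ 0`, `1/n ↦ e_n`, is a topological embedding of `s`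
onto its image in `(ℤ^(ℕ), τ)`; in particular `e_n → 0` in `τ`. -/
theorem sMap_isEmbedding :
    @Topology.IsEmbedding _ _ _ tau sMap ∧
      Tendsto (fun n : ℕ => (Finsupp.single n 1 : ℕ →₀ ℤ)) atTop (@nhds _ tau 0) := by
  letI : TopologicalSpace (ℕ →₀ ℤ) := tau
  have hle : tau ≤ tSpec.toTopologicalSpace :=
    sInf_le (Set.mem_image_of_mem _ tSpec_mem)
  have hemb : @Topology.IsEmbedding _ _ _ tau sMap := by
    refine ⟨⟨le_antisymm ?_ ?_⟩, sMap_injective⟩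
    · exact continuous_iff_le_induced.mp sMap_cont
    · calc TopologicalSpace.induced sMap tau
          ≤ TopologicalSpace.induced sMap tSpec.toTopologicalSpace :=
            induced_mono hle
        _ = TopologicalSpace.induced (phi ∘ sMap) inferInstance := by
            show TopologicalSpace.induced sMap (TopologicalSpace.induced phi inferInstance) = _
            rw [induced_compose]
        _ = instTopologicalSpaceSubtype := by rw [phi_comp_fun]; rfl
  refine ⟨hemb, ?_⟩
  have h0 : (0 : ℝ) ∈ sSet := Or.inl rfl
  have hmem : ∀ n : ℕ, (1 / (n : ℝ)) ∈ sSet := by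
    intro n
    rcases Nat.eq_zero_or_pos n with h | h
    · subst h; exact Or.inl (by simp)
    · exact Or.inr ⟨n, h, rfl⟩
  set g : ℕ → sSet := fun n => ⟨1 / (n : ℝ), hmem n⟩ with hg
  have hgt : Tendsto g atTop (𝓝 (⟨0, h0⟩ : sSet)) := by
    rw [tendsto_subtype_rng]
    exact tendsto_one_div_atTop_nhds_zero_nat.comp tendsto_natCast_atTop_atTop
  have h1 : Tendsto (sMap ∘ g) atTop (@nhds _ tau (sMap ⟨0, h0⟩)) :=
    (sMap_cont.tendsto _).comp hgt
  have h2 : sMap ⟨0, h0⟩ = 0 := by simp [sMap]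
  rw [h2] at h1
  refine h1.congr' ?_
  filter_upwards [eventually_ge_atTop 1] with n hn
  have hn' : (0 : ℝ) < n := by exact_mod_cast hn
  have hne : ((g n : sSet) : ℝ) ≠ 0 := by
    show (1 / (n : ℝ)) ≠ 0; positivity
  show sMap (g n) = Finsupp.single n 1
  rw [sMap, if_neg hne]
  congr 1
  show ⌈(1 : ℝ) / (1 / (n : ℝ))⌉₊ = n
  rw [one_div_one_div, Nat.ceil_natCast]

end
end

section
/- Let z ∈ 𝕊 have infinite order. Then there exists a sequence (a_n) of positive integers such that for every v ∈ 𝕊, one has v^{a_n} → 1 as n → ∞ if and only if v belongs to the cyclic subgroup ⟨z⟩ generated by z. -/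
/-!
Write `z = exp (2πiα)` with `α` irrational, and let `p_n / q_n` be the convergents of `α`, `a_n`
its partial quotients and `θ_n = q_n α - p_n`, so that `a_{n+1} |θ_n| ≤ |θ_{n-1}|` and `θ_n → 0`.
The sequence runs, block after block, through the numbers `j q_n` with `1 ≤ j ≤ a_{n+1}`.

If `β = kα + l`, then `‖j q_n β‖ = ‖j k θ_n‖ ≤ |k| |θ_{n-1}| → 0` (distance to the nearest
integer). Conversely, if `‖j q_n β‖ → 0` along the blocks, the offsets `δ_n = q_n β - r_n`,
`r_n = round (q_n β)`, tend to `0`, and since the multiples `j δ_n`, `j ≤ a_{n+1}`, stay near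
integers while moving in steps too small to pass `1/2`, also `a_{n+1} δ_n → 0`. Hence the integers
`r_n` eventually satisfy the recurrence `r_{n+1} = a_{n+1} r_n + r_{n-1}` of `p_n` and `q_n`. As
`p_{n+1} q_n - p_n q_{n+1} = ±1`, this gives `r_n = K p_n + L q_n`, so
`q_n (β - Kα - L) = δ_n - K θ_n → 0` and `β = Kα + L`.
-/

open Filter Topology

noncomputable section

section LinearRecurrence

theorem eq_of_linear_recurrence {R : Type*} [Add R] [Mul R] {c x y : ℕ → R} {N : ℕ}
    (hx : ∀ n ≥ N, x (n + 2) = c n * x (n + 1) + x n)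
    (hy : ∀ n ≥ N, y (n + 2) = c n * y (n + 1) + y n)
    (h₀ : x N = y N) (h₁ : x (N + 1) = y (N + 1)) : ∀ n ≥ N, x n = y n := by
  suffices h : ∀ k, x (N + k) = y (N + k) ∧ x (N + k + 1) = y (N + k + 1) by
    intro n hn
    obtain ⟨k, rfl⟩ := Nat.exists_eq_add_of_le hn
    exact (h k).1
  intro k
  induction k with
  | zero => exact ⟨h₀, h₁⟩
  | succ k ih =>
    refine ⟨ih.2, ?_⟩
    rw [show N + (k + 1) + 1 = N + k + 2 by omega, hx _ (by omega), hy _ (by omega), ih.1, ih.2]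

variable {R : Type*} [CommRing R] {c x y r : ℕ → R}

theorem casoratian_eq_neg_one_pow_mul (hx : ∀ n, x (n + 2) = c n * x (n + 1) + x n)
    (hy : ∀ n, y (n + 2) = c n * y (n + 1) + y n) (n : ℕ) :
    x (n + 1) * y n - x n * y (n + 1) = (-1) ^ n * (x 1 * y 0 - x 0 * y 1) := by
  induction n with
  | zero => simp
  | succ n ih =>
    rw [hx, hy, pow_succ]
    linear_combination (-1 : R) * ih

theorem exists_eq_add_of_linear_recurrence {N : ℕ} (hx : ∀ n, x (n + 2) = c n * x (n + 1) + x n)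
    (hy : ∀ n, y (n + 2) = c n * y (n + 1) + y n)
    (hr : ∀ n ≥ N, r (n + 2) = c n * r (n + 1) + r n)
    (hdet : IsUnit (x (N + 1) * y N - x N * y (N + 1))) :
    ∃ K L : R, ∀ n ≥ N, r n = K * x n + L * y n := by
  obtain ⟨u, hu⟩ := hdet
  have hinv : (↑u⁻¹ : R) * u = 1 := u.inv_mul
  refine ⟨↑u⁻¹ * (r (N + 1) * y N - r N * y (N + 1)), ↑u⁻¹ * (x (N + 1) * r N - x N * r (N + 1)),
    eq_of_linear_recurrence hr (fun n _ => by rw [hx, hy]; ring) ?_ ?_⟩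
  · linear_combination (-r N) * hinv + (r N * ↑u⁻¹) * hu
  · linear_combination (-r (N + 1)) * hinv + (r (N + 1) * ↑u⁻¹) * hu

end LinearRecurrence

theorem Filter.tendsto_sigma_fst_cofinite {ι : Type*} {β : ι → Type*} [∀ i, Finite (β i)] :
    Tendsto (Sigma.fst : (Σ i, β i) → ι) cofinite cofinite :=
  Tendsto.cofinite_of_finite_preimage_singleton fun i => by
    rw [← Set.range_sigmaMk]; exact Set.finite_range _ |>.to_subtype

theorem Filter.eventually_atTop_forall_sigma_mk {β : ℕ → Type*} {p : (Σ n, β n) → Prop}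
    (h : ∀ᶠ s in cofinite, p s) : ∀ᶠ n in atTop, ∀ j, p ⟨n, j⟩ := by
  obtain ⟨N, hN⟩ := (h.image Sigma.fst).bddAbove
  refine eventually_atTop.2 ⟨N + 1, fun n hn j => by_contra fun hj => ?_⟩
  have : n ≤ N := hN ⟨⟨n, j⟩, hj, rfl⟩
  omega

theorem Equiv.tendsto_comp_atTop_iff {ι α : Type*} (e : ℕ ≃ ι) {f : ι → α} {l : Filter α} :
    Tendsto (f ∘ e) atTop l ↔ Tendsto f cofinite l := by
  rw [← Nat.cofinite_eq_atTop, ← tendsto_map'_iff, ← comap_equiv_symm,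
    e.symm.injective.comap_cofinite_eq]

theorem UnitAddCircle.norm_coe_le_abs (x : ℝ) : ‖(x : UnitAddCircle)‖ ≤ |x| := by
  simpa [UnitAddCircle.norm_eq] using round_le x 0

theorem UnitAddCircle.norm_coe_add_intCast (x : ℝ) (m : ℤ) :
    ‖((x + m : ℝ) : UnitAddCircle)‖ = ‖(x : UnitAddCircle)‖ := by
  rw [UnitAddCircle.norm_eq, UnitAddCircle.norm_eq, round_add_intCast]
  push_cast
  ring_nf

theorem UnitAddCircle.norm_coe_of_abs_le_half {x : ℝ} (hx : |x| ≤ 1 / 2) :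
    ‖(x : UnitAddCircle)‖ = |x| :=
  (AddCircle.norm_coe_eq_abs_iff (p := 1) one_ne_zero).2 (by simpa using hx)

theorem abs_nat_mul_lt_of_forall_norm_coe_lt {δ ε : ℝ} {B : ℕ} (hε : ε ≤ 1 / 4) (hδ : |δ| < ε)
    (h : ∀ j < B, ‖(((j + 1 : ℕ) * δ : ℝ) : UnitAddCircle)‖ < ε) : |B * δ| < ε := by
  suffices ∀ j ≤ B, |j * δ| < ε from this B le_rfl
  intro j hj
  induction j with
  | zero => simpa using (abs_nonneg δ).trans_lt hδ
  | succ j ih =>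
    have hsmall : |((j + 1 : ℕ) : ℝ) * δ| ≤ 1 / 2 := by
      calc |((j + 1 : ℕ) : ℝ) * δ| ≤ |j * δ| + |δ| := by
            push_cast; simpa [add_mul] using abs_add_le (j * δ) δ
        _ ≤ 1 / 2 := by linarith [ih (by omega)]
    rw [← UnitAddCircle.norm_coe_of_abs_le_half hsmall]
    exact h j (by omega)

theorem euclid_step {u v : ℝ} (huv : u * v < 0) :
    0 ≤ u * (⌊|u| / |v|⌋₊ * v + u) ∧ |⌊|u| / |v|⌋₊ * v + u| = |u| - ⌊|u| / |v|⌋₊ * |v| ∧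
      |⌊|u| / |v|⌋₊ * v + u| < |v| := by
  have hv : 0 < |v| := abs_pos.2 (by rintro rfl; simp at huv)
  set b : ℝ := (⌊|u| / |v|⌋₊ : ℝ)
  have hb_le : b * |v| ≤ |u| := by
    simpa [div_mul_cancel₀ _ hv.ne'] using
      mul_le_mul_of_nonneg_right (Nat.floor_le (div_nonneg (abs_nonneg u) hv.le)) hv.le
  have hlt_b : |u| < (b + 1) * |v| := by
    simpa [div_mul_cancel₀ _ hv.ne'] using
      mul_lt_mul_of_pos_right (Nat.lt_floor_add_one (|u| / |v|)) hv
  rcases lt_or_gt_of_ne (show u ≠ 0 by rintro rfl; simp at huv) with hu | hu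
  · rw [abs_of_neg hu, abs_of_pos (by nlinarith : 0 < v)] at *
    rw [abs_of_nonpos (by linarith)]
    exact ⟨by nlinarith, by ring, by linarith⟩
  · rw [abs_of_pos hu, abs_of_neg (by nlinarith : v < 0)] at *
    rw [abs_of_nonneg (by linarith)]
    exact ⟨by nlinarith, by ring, by linarith⟩

namespace ContinuedFraction

variable (α : ℝ)

/-- `err α (n + 1)`, `den α (n + 1)`, `num α (n + 1)` and `quo α n` are `θ_n`, `q_n`, `p_n` and
`a_{n+1}`. The errors are generated directly by the Euclidean algorithm on `-1` and `fract α`, and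
the convergents are recovered from its quotients. -/
def err : ℕ → ℝ
  | 0 => -1
  | 1 => Int.fract α
  | n + 2 => ⌊|err n| / |err (n + 1)|⌋₊ * err (n + 1) + err n

def quo (n : ℕ) : ℕ := ⌊|err α n| / |err α (n + 1)|⌋₊

def den : ℕ → ℕ
  | 0 => 0
  | 1 => 1
  | n + 2 => quo α n * den (n + 1) + den n

def num : ℕ → ℤ
  | 0 => 1
  | 1 => ⌊α⌋
  | n + 2 => quo α n * num (n + 1) + num n

theorem err_add_two (n : ℕ) : err α (n + 2) = quo α n * err α (n + 1) + err α n := by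
  rw [err, quo]

theorem den_add_two {R : Type*} [CommRing R] (n : ℕ) :
    (den α (n + 2) : R) = quo α n * (den α (n + 1) : R) + den α n := by
  rw [den]; push_cast; ring

theorem num_add_two {R : Type*} [CommRing R] (n : ℕ) :
    (num α (n + 2) : R) = quo α n * (num α (n + 1) : R) + num α n := by
  rw [num]; push_cast; ring

theorem err_eq (n : ℕ) : err α n = den α n * α - num α n := by
  refine eq_of_linear_recurrence (N := 0) (c := fun n => (quo α n : ℝ))
    (y := fun n => den α n * α - num α n) (fun n _ => err_add_two α n) (fun n _ => ?_) ?_ ?_ n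
    n.zero_le
  · rw [den_add_two, num_add_two]; ring
  · simp [err, den, num]
  · simp [err, den, num, ← Int.self_sub_floor]

theorem num_mul_den_sub (n : ℕ) :
    num α (n + 1) * den α n - num α n * den α (n + 1) = -(-1) ^ n := by
  rw [casoratian_eq_neg_one_pow_mul (x := fun n => num α n) (y := fun n => (den α n : ℤ))
    (c := fun n => (quo α n : ℤ)) (num_add_two α) (den_add_two α)]
  simp [num, den]

variable {α}

theorem err_ne_zero (hα : Irrational α) (n : ℕ) : err α n ≠ 0 := by
  rw [err_eq, sub_ne_zero]
  rcases eq_or_ne (den α n) 0 with h | h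
  · have := num_mul_den_sub α n
    rw [h] at this
    have hnum : num α n ≠ 0 := by rintro h'; simp [h'] at this
    simpa [h] using (Int.cast_ne_zero (α := ℝ)).2 hnum |>.symm
  · exact (hα.natCast_mul h).ne_int _

theorem err_mul_err_succ_neg_and_abs_lt (hα : Irrational α) (n : ℕ) :
    err α n * err α (n + 1) < 0 ∧ |err α (n + 1)| < |err α n| := by
  induction n with
  | zero =>
    have h1 : 0 < Int.fract α := (Int.fract_nonneg α).lt_of_ne (err_ne_zero hα 1).symm
    simp only [err]
    rw [abs_neg, abs_one, abs_of_pos h1]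
    exact ⟨by linarith, Int.fract_lt_one α⟩
  | succ n ih =>
    obtain ⟨hsign, -, hlt⟩ := euclid_step ih.1
    rw [← quo, ← err_add_two] at hsign hlt
    have huw : 0 < err α n * err α (n + 2) :=
      hsign.lt_of_ne (mul_ne_zero (err_ne_zero hα n) (err_ne_zero hα (n + 2))).symm
    refine ⟨?_, hlt⟩
    nlinarith [mul_neg_of_neg_of_pos ih.1 huw, mul_self_pos.2 (err_ne_zero hα n)]

theorem one_le_quo (hα : Irrational α) (n : ℕ) : 1 ≤ quo α n := by
  have hv : 0 < |err α (n + 1)| := abs_pos.2 (err_ne_zero hα _)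
  rw [quo, Nat.one_le_floor_iff, one_le_div hv]
  exact (err_mul_err_succ_neg_and_abs_lt hα n).2.le

theorem quo_mul_abs_err_succ_le (hα : Irrational α) (n : ℕ) :
    quo α n * |err α (n + 1)| ≤ |err α n| := by
  have hv : 0 < |err α (n + 1)| := abs_pos.2 (err_ne_zero hα _)
  calc quo α n * |err α (n + 1)| ≤ |err α n| / |err α (n + 1)| * |err α (n + 1)| :=
        mul_le_mul_of_nonneg_right (Nat.floor_le (by positivity)) hv.le
    _ = |err α n| := div_mul_cancel₀ _ hv.ne'

theorem two_mul_abs_err_add_two_lt (hα : Irrational α) (n : ℕ) :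
    2 * |err α (n + 2)| < |err α n| := by
  obtain ⟨-, heq, hlt⟩ := euclid_step (err_mul_err_succ_neg_and_abs_lt hα n).1
  rw [← quo, ← err_add_two] at heq hlt
  have : (1 : ℝ) ≤ quo α n := by exact_mod_cast one_le_quo hα n
  nlinarith [abs_nonneg (err α (n + 1))]

theorem tendsto_err (hα : Irrational α) : Tendsto (err α) atTop (𝓝 0) := by
  rw [tendsto_zero_iff_abs_tendsto_zero]
  have hanti : Antitone fun n => |err α n| :=
    antitone_nat_of_succ_le fun n => (err_mul_err_succ_neg_and_abs_lt hα n).2.le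
  have hlim := tendsto_atTop_ciInf hanti ⟨0, by rintro _ ⟨n, rfl⟩; exact abs_nonneg _⟩
  set L := ⨅ n, |err α n|
  have hL : 2 * L ≤ L :=
    le_of_tendsto_of_tendsto' ((hlim.comp (tendsto_add_atTop_nat 2)).const_mul 2) hlim
      fun n => (two_mul_abs_err_add_two_lt hα n).le
  have hL0 : 0 ≤ L := le_ciInf fun n => abs_nonneg (err α n)
  rwa [show L = 0 by linarith] at hlim

theorem one_le_den_succ (hα : Irrational α) (n : ℕ) : 1 ≤ den α (n + 1) := by
  induction n with
  | zero => simp [den]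
  | succ n ih =>
    rw [den]
    nlinarith [one_le_quo hα n]

variable (α) in
abbrev BlockIndex : Type := Σ n, Fin (quo α n)

variable (α) in
def charSeq (s : BlockIndex α) : ℕ := (s.2 + 1) * den α (s.1 + 1)

theorem norm_coe_charSeq_mul_le (hα : Irrational α) (k l : ℤ) (s : BlockIndex α) :
    ‖((charSeq α s * (k * α + l) : ℝ) : UnitAddCircle)‖ ≤ |(k : ℝ)| * |err α s.1| := by
  obtain ⟨n, j⟩ := s
  have hj : ((j : ℕ) + 1 : ℝ) ≤ quo α n := by exact_mod_cast j.isLt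
  have hsplit : (charSeq α ⟨n, j⟩ * (k * α + l) : ℝ) = ((j : ℕ) + 1) * k * err α (n + 1) +
      (((j + 1) * (k * num α (n + 1) + l * den α (n + 1)) : ℤ) : ℝ) := by
    simp only [charSeq, err_eq]; push_cast; ring
  rw [hsplit, UnitAddCircle.norm_coe_add_intCast]
  calc _ ≤ |((j : ℕ) + 1) * k * err α (n + 1)| := UnitAddCircle.norm_coe_le_abs _
    _ = |(k : ℝ)| * (((j : ℕ) + 1) * |err α (n + 1)|) := by
        rw [abs_mul, abs_mul, abs_of_pos (by positivity : (0 : ℝ) < (j : ℕ) + 1)]; ring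
    _ ≤ |(k : ℝ)| * (quo α n * |err α (n + 1)|) := by gcongr
    _ ≤ |(k : ℝ)| * |err α n| := by gcongr; exact quo_mul_abs_err_succ_le hα n

theorem tendsto_coe_charSeq_mul (hα : Irrational α) (k l : ℤ) :
    Tendsto (fun s => ((charSeq α s * (k * α + l) : ℝ) : UnitAddCircle)) cofinite (𝓝 0) := by
  rw [tendsto_zero_iff_norm_tendsto_zero]
  have hbound : Tendsto (fun s : BlockIndex α => |(k : ℝ)| * |err α s.1|) cofinite (𝓝 0) := by
    have hfst : Tendsto (Sigma.fst : BlockIndex α → ℕ) cofinite atTop :=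
      Nat.cofinite_eq_atTop ▸ tendsto_sigma_fst_cofinite
    have := ((tendsto_err hα).abs.const_mul |(k : ℝ)|).comp hfst
    rwa [abs_zero, mul_zero] at this
  exact squeeze_zero (fun _ => norm_nonneg _) (norm_coe_charSeq_mul_le hα k l) hbound

theorem charSeq_pos (hα : Irrational α) (s : BlockIndex α) : 0 < charSeq α s :=
  Nat.mul_pos s.2.val.succ_pos (one_le_den_succ hα s.1)

variable (α) in
def offset (β : ℝ) (n : ℕ) : ℝ := den α n * β - round (den α n * β)

section Converse

variable {β : ℝ} (hα : Irrational α)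
  (H : Tendsto (fun s => ((charSeq α s * β : ℝ) : UnitAddCircle)) cofinite (𝓝 0))
include hα H

omit hα in
theorem eventually_norm_coe_mul_offset_lt {ε : ℝ} (hε : 0 < ε) :
    ∀ᶠ n in atTop, ∀ j : Fin (quo α n),
      ‖(((j + 1 : ℕ) * offset α β (n + 1) : ℝ) : UnitAddCircle)‖ < ε := by
  refine (eventually_atTop_forall_sigma_mk ((tendsto_zero_iff_norm_tendsto_zero.1 H).eventually
    (gt_mem_nhds hε))).mono fun n hn j => ?_
  have hsplit : ((j + 1 : ℕ) * offset α β (n + 1) : ℝ) = charSeq α ⟨n, j⟩ * β +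
      ((-((j + 1 : ℕ) * round (den α (n + 1) * β)) : ℤ) : ℝ) := by
    simp only [offset, charSeq]; push_cast; ring
  rw [hsplit, UnitAddCircle.norm_coe_add_intCast]
  exact hn j

theorem tendsto_offset : Tendsto (offset α β) atTop (𝓝 0) := by
  refine (tendsto_add_atTop_iff_nat 1).1 (Metric.tendsto_nhds.2 fun ε hε => ?_)
  refine (eventually_norm_coe_mul_offset_lt H hε).mono fun n hn => ?_
  have hhalf : |offset α β (n + 1)| ≤ 1 / 2 := abs_sub_round _
  simpa [Real.dist_eq, UnitAddCircle.norm_coe_of_abs_le_half hhalf] using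
    hn ⟨0, one_le_quo hα n⟩

theorem eventually_abs_quo_mul_offset_lt :
    ∀ᶠ n in atTop, |quo α n * offset α β (n + 1)| < 1 / 8 := by
  filter_upwards [eventually_norm_coe_mul_offset_lt H (by norm_num : (0 : ℝ) < 1 / 8),
    tendsto_add_atTop_nat 1 |>.eventually <|
      Metric.tendsto_nhds.1 (tendsto_offset hα H) (1 / 8) (by norm_num)] with n hn h1
  rw [Real.dist_0_eq_abs] at h1
  exact abs_nat_mul_lt_of_forall_norm_coe_lt (by norm_num) h1 fun j hj => hn ⟨j, hj⟩

theorem eventually_round_den_mul_add_two : ∀ᶠ n in atTop, round (den α (n + 2) * β) =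
    quo α n * round (den α (n + 1) * β) + round (den α n * β) := by
  have hsmall := Metric.tendsto_nhds.1 (tendsto_offset hα H) (1 / 8) (by norm_num)
  filter_upwards [hsmall, tendsto_add_atTop_nat 2 |>.eventually hsmall,
    eventually_abs_quo_mul_offset_lt hα H] with n h0 h2 h1
  simp only [Real.dist_0_eq_abs] at h0 h2
  set E : ℤ := round (den α (n + 2) * β) - quo α n * round (den α (n + 1) * β) -
    round (den α n * β) with hE
  have hE_eq : (E : ℝ) = -offset α β (n + 2) + quo α n * offset α β (n + 1) + offset α β n := by
    simp only [hE, offset, den_add_two α n (R := ℝ)]; push_cast; ring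
  have hE_lt : |(E : ℝ)| < 1 := by
    rw [hE_eq]
    have := abs_add_three (-offset α β (n + 2)) (quo α n * offset α β (n + 1)) (offset α β n)
    rw [abs_neg] at this
    linarith
  have : E = 0 := Int.abs_lt_one_iff.1 (by exact_mod_cast hE_lt)
  linarith

theorem exists_eq_of_tendsto_coe_charSeq_mul : ∃ k l : ℤ, β = k * α + l := by
  obtain ⟨N, hN⟩ := eventually_atTop.1 (eventually_round_den_mul_add_two hα H)
  obtain ⟨K, L, hKL⟩ := exists_eq_add_of_linear_recurrence (c := fun n => (quo α n : ℤ))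
    (x := num α) (y := fun n => (den α n : ℤ)) (r := fun n => round (den α n * β))
    (num_add_two α) (den_add_two α) hN
    (by rw [num_mul_den_sub]; exact (isUnit_neg_one.pow N).neg)
  refine ⟨K, L, ?_⟩
  have hbound : ∀ n ≥ N,
      |β - (K * α + L)| ≤ |offset α β (n + 1)| + |(K : ℝ)| * |err α (n + 1)| := by
    intro n hn
    have hden : (1 : ℝ) ≤ den α (n + 1) := by exact_mod_cast one_le_den_succ hα n
    have hround : (round (den α (n + 1) * β) : ℝ) = K * num α (n + 1) + L * den α (n + 1) := by
      exact_mod_cast hKL (n + 1) (by omega)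
    have hkey : den α (n + 1) * (β - (K * α + L)) = offset α β (n + 1) - K * err α (n + 1) := by
      rw [offset, err_eq, hround]; ring
    calc |β - (K * α + L)| ≤ den α (n + 1) * |β - (K * α + L)| :=
          le_mul_of_one_le_left (abs_nonneg _) hden
      _ = |offset α β (n + 1) - K * err α (n + 1)| := by
          rw [← hkey, abs_mul, abs_of_nonneg (by positivity : (0 : ℝ) ≤ den α (n + 1))]
      _ ≤ _ := by rw [← abs_mul]; exact abs_sub _ _
  have hlim : Tendsto (fun n => |offset α β n| + |(K : ℝ)| * |err α n|) atTop (𝓝 0) := by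
    simpa using (tendsto_offset hα H).abs.add ((tendsto_err hα).abs.const_mul |(K : ℝ)|)
  have := ge_of_tendsto ((tendsto_add_atTop_iff_nat 1).2 hlim) (eventually_atTop.2 ⟨N, hbound⟩)
  linarith [abs_nonpos_iff.1 this]

end Converse

end ContinuedFraction

open ContinuedFraction in
theorem Irrational.exists_seq_tendsto_coe_mul_iff {α : ℝ} (hα : Irrational α) :
    ∃ a : ℕ → ℕ, (∀ n, 0 < a n) ∧ ∀ β : ℝ,
      Tendsto (fun n => ((a n * β : ℝ) : UnitAddCircle)) atTop (𝓝 0) ↔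
        ∃ k l : ℤ, β = k * α + l := by
  have : Infinite (BlockIndex α) :=
    .of_surjective Sigma.fst fun n => ⟨⟨n, 0, one_le_quo hα n⟩, rfl⟩
  -- Any enumeration works: the blocks are finite, and the argument only sees the cofinite filter.
  obtain ⟨_⟩ := nonempty_denumerable (BlockIndex α)
  let e := (Denumerable.eqv (BlockIndex α)).symm
  refine ⟨charSeq α ∘ e, fun n => charSeq_pos hα (e n), fun β => ?_⟩
  refine (e.tendsto_comp_atTop_iff (f := fun s => ((charSeq α s * β : ℝ) : UnitAddCircle))).trans
    ⟨exists_eq_of_tendsto_coe_charSeq_mul hα, ?_⟩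
  rintro ⟨k, l, rfl⟩
  exact tendsto_coe_charSeq_mul hα k l

namespace UnitAddCircle

open AddCircle

theorem exists_toCircle_coe_eq (z : Circle) : ∃ x : ℝ, toCircle (x : UnitAddCircle) = z := by
  obtain ⟨y, rfl⟩ := (homeomorphCircle (one_ne_zero (α := ℝ))).surjective z
  induction y using QuotientAddGroup.induction_on with
  | H x => exact ⟨x, (homeomorphCircle_apply _ _).symm⟩

theorem irrational_of_toCircle_coe_pow_ne_one {α : ℝ}
    (h : ∀ n : ℕ, 0 < n → toCircle (α : UnitAddCircle) ^ n ≠ 1) : Irrational α := by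
  have hinf : ¬IsOfFinAddOrder (α : UnitAddCircle) := by
    rw [isOfFinAddOrder_iff_nsmul_eq_zero]
    rintro ⟨n, hn, h0⟩
    exact h n hn (by rw [← toCircle_nsmul, h0, toCircle_zero])
  rintro ⟨q, rfl⟩
  exact not_isOfFinAddOrder_iff_forall_rat_ne_div.1 hinf q (div_one _).symm

theorem tendsto_toCircle_coe_pow_iff (a : ℕ → ℕ) (β : ℝ) :
    Tendsto (fun n => toCircle (β : UnitAddCircle) ^ a n) atTop (𝓝 1) ↔
      Tendsto (fun n => ((a n * β : ℝ) : UnitAddCircle)) atTop (𝓝 0) := by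
  have hφ := (homeomorphCircle (one_ne_zero (α := ℝ))).isInducing
  simp_rw [hφ.tendsto_nhds_iff, Function.comp_def, homeomorphCircle_apply, toCircle_zero,
    ← toCircle_nsmul, ← coe_nsmul, nsmul_eq_mul]

theorem toCircle_coe_mem_zpowers_iff (α β : ℝ) :
    toCircle (β : UnitAddCircle) ∈ Subgroup.zpowers (toCircle (α : UnitAddCircle)) ↔
      ∃ k l : ℤ, β = k * α + l := by
  simp_rw [Subgroup.mem_zpowers_iff, ← toCircle_zsmul, (injective_toCircle one_ne_zero).eq_iff,
    ← coe_zsmul]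
  refine exists_congr fun k => ?_
  rw [eq_comm, ← sub_eq_zero, ← coe_sub, coe_eq_zero_iff]
  simp_rw [zsmul_eq_mul, mul_one, eq_sub_iff_add_eq, eq_comm (b := β), add_comm]

end UnitAddCircle

/-- For `z ∈ 𝕊` of infinite order there is a sequence `(a_n)` of positive integers such
that for `v ∈ 𝕊`: `v^{a_n} → 1` iff `v ∈ ⟨z⟩`. -/
theorem exists_characterizing_sequence (z : Circle) (hz : ∀ n : ℕ, 0 < n → z ^ n ≠ 1) :
    ∃ a : ℕ → ℕ, (∀ n : ℕ, 0 < a n) ∧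
      ∀ v : Circle,
        Tendsto (fun n : ℕ => v ^ a n) atTop (𝓝 (1 : Circle)) ↔ v ∈ Subgroup.zpowers z := by
  obtain ⟨α, rfl⟩ := UnitAddCircle.exists_toCircle_coe_eq z
  obtain ⟨a, ha, hiff⟩ :=
    (UnitAddCircle.irrational_of_toCircle_coe_pow_ne_one hz).exists_seq_tendsto_coe_mul_iff
  refine ⟨a, ha, fun v => ?_⟩
  obtain ⟨β, rfl⟩ := UnitAddCircle.exists_toCircle_coe_eq v
  rw [UnitAddCircle.tendsto_toCircle_coe_pow_iff, hiff, UnitAddCircle.toCircle_coe_mem_zpowers_iff]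

end
end
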